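/- arXiv:0812.2009 — 9 statements merged into one kernel-verified Lean document; each statement's English description precedes it below -/
import Mathlib

section
/- Let F be a field in which 3 is invertible, let W be a Weierstrass curve over F with coefficients a1, a2, a3, a4, a6 and nonzero discriminant, and let P = (x₀, y₀) be an affine point on W. Then P has order exactly 3 in the group of points of W if and only if P is a flex point, i.e. if and only if 2y₀ + a1·x₀ + a3 ≠ 0 and, setting λ = (3x₀² + 2a2·x₀ + a4 − a1·y₀)/(2y₀ + a1·x₀ + a3) (the slope of the tangent line at P), the polynomial X³ + a2·X² + a4·X + a6 − (λ(X − x₀) + y₀)² − (a1·X + a3)(λ(X − x₀) + y₀) is equal to (X − x₀)³ in F[X]. -/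
/-!
The tangent line at `P` meets the curve at `P` twice and at `-2P`, so substituting it into the
Weierstrass equation gives `(X - x₀)² (X - x(2P))` (`addPolynomial_slope`). Hence `P` is a flex
exactly when `x(2P) = x₀`, and since the `Y`-coordinate of `2P` is then forced to be that of `-P`,
this says `2P = -P`, i.e. `3P = 0`. When the tangent is vertical, `P` is `2`-torsion and both
sides fail.
-/

open Polynomial WeierstrassCurve.Affine

namespace WeierstrassCurve.Affine

section CommRing

variable {R : Type*} [CommRing R] (W : Affine R)

lemma Y_sub_negY (x y : R) : y - W.negY x y = 2 * y + W.a₁ * x + W.a₃ := by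
  rw [negY]
  ring

lemma Y_ne_negY_iff {x y : R} : y ≠ W.negY x y ↔ 2 * y + W.a₁ * x + W.a₃ ≠ 0 := by
  rw [← sub_ne_zero, Y_sub_negY]

lemma neg_addPolynomial (x y ℓ : R) :
    -W.addPolynomial x y ℓ =
      X ^ 3 + C W.a₂ * X ^ 2 + C W.a₄ * X + C W.a₆ - (C ℓ * (X - C x) + C y) ^ 2
        - (C W.a₁ * X + C W.a₃) * (C ℓ * (X - C x) + C y) := by
  rw [addPolynomial, linePolynomial, polynomial]
  simp only [eval_add, eval_sub, eval_mul, eval_pow, eval_C, eval_X]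
  ring

variable {W}

lemma addY_of_addX_eq {x₁ x₂ y₁ ℓ : R} (h : W.addX x₁ x₂ ℓ = x₁) :
    W.addY x₁ x₂ y₁ ℓ = W.negY x₁ y₁ := by
  rw [addY, negAddY, h, sub_self, mul_zero, zero_add]

end CommRing

section Field

variable {F : Type*} [Field F] [DecidableEq F] {W : Affine F}

lemma slope_self_of_Y_ne {x y : F} (hy : y ≠ W.negY x y) :
    W.slope x x y y =
      (3 * x ^ 2 + 2 * W.a₂ * x + W.a₄ - W.a₁ * y) / (2 * y + W.a₁ * x + W.a₃) := by
  rw [slope_of_Y_ne rfl hy, Y_sub_negY]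

lemma addX_slope_self_eq_iff {x y : F} (h : W.Equation x y) (hy : y ≠ W.negY x y) :
    W.addX x x (W.slope x x y y) = x ↔ -W.addPolynomial x y (W.slope x x y y) = (X - C x) ^ 3 := by
  rw [addPolynomial_slope h h fun hxy => hy hxy.2, neg_neg, pow_three',
    mul_right_inj' (mul_ne_zero (X_sub_C_ne_zero x) (X_sub_C_ne_zero x)), sub_right_inj, C_inj]

namespace Point

lemma three_nsmul_some_eq_zero_iff {x y : F} (h : W.Nonsingular x y) :
    3 • some x y h = 0 ↔ y ≠ W.negY x y ∧ W.addX x x (W.slope x x y y) = x := by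
  rw [succ_nsmul, two_nsmul, add_eq_zero_iff_eq_neg]
  by_cases hy : y = W.negY x y
  · rw [add_self_of_Y_eq hy]
    exact iff_of_false (fun h0 => some_ne_zero h (neg_eq_zero.mp h0.symm)) fun h2 => h2.1 hy
  · rw [add_self_of_Y_ne hy, neg_some, some.injEq]
    exact ⟨fun h2 => ⟨hy, h2.1⟩, fun h2 => ⟨h2.2, addY_of_addX_eq h2.2⟩⟩

end Point

end Field

end WeierstrassCurve.Affine

open scoped Classical in
theorem order_three_iff_flex_general {F : Type*} [Field F]
    (W : WeierstrassCurve F) (x₀ y₀ : F)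
    (hP : W.toAffine.Nonsingular x₀ y₀) :
    addOrderOf (WeierstrassCurve.Affine.Point.some x₀ y₀ hP) = 3 ↔
      (2 * y₀ + W.a₁ * x₀ + W.a₃ ≠ 0 ∧
        X ^ 3 + C W.a₂ * X ^ 2 + C W.a₄ * X + C W.a₆
          - (C ((3 * x₀ ^ 2 + 2 * W.a₂ * x₀ + W.a₄ - W.a₁ * y₀)
                / (2 * y₀ + W.a₁ * x₀ + W.a₃)) * (X - C x₀) + C y₀) ^ 2
          - (C W.a₁ * X + C W.a₃)
            * (C ((3 * x₀ ^ 2 + 2 * W.a₂ * x₀ + W.a₄ - W.a₁ * y₀)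
                / (2 * y₀ + W.a₁ * x₀ + W.a₃)) * (X - C x₀) + C y₀)
        = (X - C x₀) ^ 3) := by
  rw [addOrderOf_eq_prime_iff, and_iff_left (Point.some_ne_zero hP),
    Point.three_nsmul_some_eq_zero_iff, ← Y_ne_negY_iff]
  refine and_congr_right fun hy => ?_
  rw [← slope_self_of_Y_ne hy, ← neg_addPolynomial, addX_slope_self_eq_iff hP.1 hy]

open scoped Classical in
/-- A point `P = (x₀, y₀)` on a smooth Weierstrass curve over a field in which `3` is
invertible has order exactly `3` if and only if it is a flex point, i.e. the tangent line
at `P` meets the curve at `P` with intersection multiplicity `3`. -/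
theorem order_three_iff_flex {F : Type*} [Field F] (h3 : (3 : F) ≠ 0)
    (W : WeierstrassCurve F) (hΔ : W.Δ ≠ 0) (x₀ y₀ : F)
    (hP : W.toAffine.Nonsingular x₀ y₀) :
    addOrderOf (WeierstrassCurve.Affine.Point.some x₀ y₀ hP) = 3 ↔
      (2 * y₀ + W.a₁ * x₀ + W.a₃ ≠ 0 ∧
        X ^ 3 + C W.a₂ * X ^ 2 + C W.a₄ * X + C W.a₆
          - (C ((3 * x₀ ^ 2 + 2 * W.a₂ * x₀ + W.a₄ - W.a₁ * y₀)
                / (2 * y₀ + W.a₁ * x₀ + W.a₃)) * (X - C x₀) + C y₀) ^ 2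
          - (C W.a₁ * X + C W.a₃)
            * (C ((3 * x₀ ^ 2 + 2 * W.a₂ * x₀ + W.a₄ - W.a₁ * y₀)
                / (2 * y₀ + W.a₁ * x₀ + W.a₃)) * (X - C x₀) + C y₀)
        = (X - C x₀) ^ 3) :=
  order_three_iff_flex_general W x₀ y₀ hP
end

section
/- Let F be a field in which 3 is invertible, let W be a Weierstrass curve over F with coefficients a1, a2, a3, a4, a6 and nonzero discriminant, and let P = (x₀, y₀) be an affine point of exact order 3 in the group of points of W. Then there exists a unique Weierstrass variable change ψ = (u, r, s, t) with u = 1 such that the transformed curve ψ•W has coefficients of the form (A1, 0, A3, 0, 0) (i.e. its equation is y² + A1·xy + A3·y = x³) and such that ψ maps P to the point with coordinates (0, 0). Moreover for the resulting curve one has A3 ≠ 0 and A1³ − 27·A3 ≠ 0. -/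
open WeierstrassCurve

/-!
A point `P` of order `3` is not `2`-torsion, so its tangent has a finite slope `λ`, and
`2P = -P`, so `P` is a flex. The change `(1, x₀, λ, y₀)` moves `P` to the origin and its tangent
to `y = 0`; the new cubic then meets `y = 0` only at `x = 0`, with multiplicity three, which
kills `a₂, a₄, a₆`. Conversely `u = 1` and `ψ(P) = (0, 0)` force `r = x₀`, `t = y₀`, and then
`a₄ = 0` forces `s = λ`. Once `a₂ = a₄ = a₆ = 0` the discriminant is `a₃³ (a₁³ - 27 a₃)`.
-/
lemma add_self_eq_neg_of_addOrderOf_eq_three {G : Type*} [AddGroup G] {P : G}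
    (h : addOrderOf P = 3) : P + P = -P := by
  refine eq_neg_of_add_eq_zero_left ?_
  rw [← two_nsmul, ← succ_nsmul, show 2 + 1 = addOrderOf P from h.symm]
  exact addOrderOf_nsmul_eq_zero P

lemma add_self_ne_zero_of_addOrderOf_eq_three {G : Type*} [AddGroup G] {P : G}
    (h : addOrderOf P = 3) : P + P ≠ 0 := by
  intro h2
  have := addOrderOf_dvd_of_nsmul_eq_zero (show 2 • P = 0 by rwa [two_nsmul])
  rw [h] at this
  omega

namespace WeierstrassCurve

lemma Δ_of_a₂_a₄_a₆_eq_zero {R : Type*} [CommRing R] {W : WeierstrassCurve R}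
    (h₂ : W.a₂ = 0) (h₄ : W.a₄ = 0) (h₆ : W.a₆ = 0) :
    W.Δ = W.a₃ ^ 3 * (W.a₁ ^ 3 - 27 * W.a₃) := by
  rw [Δ, b₂, b₄, b₆, b₈, h₂, h₄, h₆]
  ring

section Translation

variable {R : Type*} [CommRing R] (W : WeierstrassCurve R) (x y s : R)

lemma a₂_translate : ((⟨1, x, s, y⟩ : VariableChange R) • W).a₂ = x - W.toAffine.addX x x s := by
  simp only [variableChange_a₂, inv_one, Units.val_one, one_pow, one_mul, Affine.addX]
  ring

lemma a₄_translate : ((⟨1, x, s, y⟩ : VariableChange R) • W).a₄ =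
    3 * x ^ 2 + 2 * W.a₂ * x + W.a₄ - W.a₁ * y - s * (y - W.toAffine.negY x y) := by
  simp only [variableChange_a₄, inv_one, Units.val_one, one_pow, one_mul, Affine.negY]
  ring

lemma a₆_translate_eq_zero_iff :
    ((⟨1, x, s, y⟩ : VariableChange R) • W).a₆ = 0 ↔ W.toAffine.Equation x y := by
  rw [Affine.equation_iff', ← neg_eq_zero]
  simp only [variableChange_a₆, inv_one, Units.val_one, one_pow, one_mul]
  ring_nf

end Translation

section Field

variable {F : Type*} [Field F] [DecidableEq F] (W : WeierstrassCurve F) {x y : F}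

lemma a₄_translate_eq_zero_iff (s : F) (hy : y ≠ W.toAffine.negY x y) :
    ((⟨1, x, s, y⟩ : VariableChange F) • W).a₄ = 0 ↔ s = W.toAffine.slope x x y y := by
  rw [a₄_translate, Affine.slope_of_Y_ne rfl hy, eq_div_iff (sub_ne_zero.2 hy), sub_eq_zero,
    eq_comm]

lemma variableChange_normalizes_iff (hy : y ≠ W.toAffine.negY x y) (ψ : VariableChange F) :
    (ψ.u = 1 ∧ (ψ • W).a₂ = 0 ∧ (ψ • W).a₄ = 0 ∧ (ψ • W).a₆ = 0 ∧
      (↑ψ.u⁻¹ : F) ^ 2 * (x - ψ.r) = 0 ∧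
      (↑ψ.u⁻¹ : F) ^ 3 * (y - ψ.t - ψ.s * (x - ψ.r)) = 0) ↔
    ψ = ⟨1, x, W.toAffine.slope x x y y, y⟩ ∧
      W.toAffine.addX x x (W.toAffine.slope x x y y) = x ∧ W.toAffine.Equation x y := by
  obtain ⟨u, r, s, t⟩ := ψ
  constructor
  · rintro ⟨rfl, h₂, h₄, h₆, hr, ht⟩
    obtain rfl : r = x := by simpa [sub_eq_zero, eq_comm] using hr
    obtain rfl : t = y := by simpa [sub_eq_zero, eq_comm] using ht
    obtain rfl := (a₄_translate_eq_zero_iff W s hy).1 h₄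
    rw [a₂_translate, sub_eq_zero] at h₂
    exact ⟨rfl, h₂.symm, (a₆_translate_eq_zero_iff W _ _ _).1 h₆⟩
  · rintro ⟨hψ, hX, hE⟩
    rw [hψ]
    refine ⟨rfl, ?_, (a₄_translate_eq_zero_iff W _ hy).2 rfl,
      (a₆_translate_eq_zero_iff W _ _ _).2 hE, by simp, by simp⟩
    rw [a₂_translate, hX, sub_self]

end Field

namespace Affine

variable {F : Type*} [Field F] [DecidableEq F] {W : Affine F}

lemma Y_ne_negY_of_addOrderOf_eq_three {x y : F} {h : W.Nonsingular x y}
    (hord : addOrderOf (Point.some x y h) = 3) : y ≠ W.negY x y :=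
  fun hy => add_self_ne_zero_of_addOrderOf_eq_three hord (Point.add_self_of_Y_eq hy)

lemma addX_slope_of_addOrderOf_eq_three {x y : F} {h : W.Nonsingular x y}
    (hord : addOrderOf (Point.some x y h) = 3) : W.addX x x (W.slope x x y y) = x := by
  have h2P := add_self_eq_neg_of_addOrderOf_eq_three hord
  rw [Point.add_self_of_Y_ne' (Y_ne_negY_of_addOrderOf_eq_three hord), neg_inj,
    Point.some.injEq] at h2P
  exact h2P.1

end Affine

end WeierstrassCurve

open Classical in
theorem exists_unique_variableChange_of_order_three_general {F : Type*} [Field F]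
    (W : WeierstrassCurve F) (hΔ : W.Δ ≠ 0) (x₀ y₀ : F)
    (hP : W.toAffine.Nonsingular x₀ y₀)
    (hord : addOrderOf (WeierstrassCurve.Affine.Point.some _ _ hP) = 3) :
    (∃! ψ : VariableChange F, ψ.u = 1 ∧
      (ψ • W).a₂ = 0 ∧ (ψ • W).a₄ = 0 ∧ (ψ • W).a₆ = 0 ∧
      (↑ψ.u⁻¹ : F) ^ 2 * (x₀ - ψ.r) = 0 ∧
      (↑ψ.u⁻¹ : F) ^ 3 * (y₀ - ψ.t - ψ.s * (x₀ - ψ.r)) = 0) ∧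
    ∀ ψ : VariableChange F, (ψ.u = 1 ∧
      (ψ • W).a₂ = 0 ∧ (ψ • W).a₄ = 0 ∧ (ψ • W).a₆ = 0 ∧
      (↑ψ.u⁻¹ : F) ^ 2 * (x₀ - ψ.r) = 0 ∧
      (↑ψ.u⁻¹ : F) ^ 3 * (y₀ - ψ.t - ψ.s * (x₀ - ψ.r)) = 0) →
      (ψ • W).a₃ ≠ 0 ∧ (ψ • W).a₁ ^ 3 - 27 * (ψ • W).a₃ ≠ 0 := by
  have hy := Affine.Y_ne_negY_of_addOrderOf_eq_three hord
  have hflex := Affine.addX_slope_of_addOrderOf_eq_three hord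
  refine ⟨⟨_, (W.variableChange_normalizes_iff hy _).2 ⟨rfl, hflex, hP.1⟩,
    fun ψ hψ => ((W.variableChange_normalizes_iff hy ψ).1 hψ).1⟩, ?_⟩
  rintro ψ ⟨hu, h₂, h₄, h₆, -⟩
  have hΔψ : (ψ • W).Δ ≠ 0 := by
    simpa [variableChange_Δ, hu] using hΔ
  rw [Δ_of_a₂_a₄_a₆_eq_zero h₂ h₄ h₆, mul_ne_zero_iff, pow_ne_zero_iff three_ne_zero] at hΔψ
  exact hΔψ

open Classical in
/-- If `P = (x₀, y₀)` is a point of exact order `3` on a smooth Weierstrass curve over a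
field in which `3` is invertible, then there is a unique variable change `ψ = (u, r, s, t)`
with `u = 1` bringing the curve into the form `y² + A1·xy + A3·y = x³` and sending `P` to
`(0, 0)`; moreover the resulting curve satisfies `A3 ≠ 0` and `A1³ - 27·A3 ≠ 0`. -/
theorem exists_unique_variableChange_of_order_three {F : Type*} [Field F] (h3 : (3 : F) ≠ 0)
    (W : WeierstrassCurve F) (hΔ : W.Δ ≠ 0) (x₀ y₀ : F)
    (hP : W.toAffine.Nonsingular x₀ y₀)
    (hord : addOrderOf (WeierstrassCurve.Affine.Point.some _ _ hP) = 3) :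
    (∃! ψ : VariableChange F, ψ.u = 1 ∧
      (ψ • W).a₂ = 0 ∧ (ψ • W).a₄ = 0 ∧ (ψ • W).a₆ = 0 ∧
      (↑ψ.u⁻¹ : F) ^ 2 * (x₀ - ψ.r) = 0 ∧
      (↑ψ.u⁻¹ : F) ^ 3 * (y₀ - ψ.t - ψ.s * (x₀ - ψ.r)) = 0) ∧
    ∀ ψ : VariableChange F, (ψ.u = 1 ∧
      (ψ • W).a₂ = 0 ∧ (ψ • W).a₄ = 0 ∧ (ψ • W).a₆ = 0 ∧
      (↑ψ.u⁻¹ : F) ^ 2 * (x₀ - ψ.r) = 0 ∧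
      (↑ψ.u⁻¹ : F) ^ 3 * (y₀ - ψ.t - ψ.s * (x₀ - ψ.r)) = 0) →
      (ψ • W).a₃ ≠ 0 ∧ (ψ • W).a₁ ^ 3 - 27 * (ψ • W).a₃ ≠ 0 :=
  exists_unique_variableChange_of_order_three_general W hΔ x₀ y₀ hP hord
end

section
/- Let F be a field, a1, a3 ∈ F with a3³·(a1³ − 27·a3) ≠ 0, and let W be the Weierstrass curve y² + a1·xy + a3·y = x³ over F (which is then smooth). In the group of points of W: the points (0, 0) and (0, −a3) lie on W, the only affine points of W with x-coordinate 0 are these two, the negative of (0,0) is (0,−a3), the sum (0,0) + (0,0) equals (0, −a3), and the point (0,0) has exact order 3. -/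
/-!
The discriminant condition forces `a₃ ≠ 0`, which makes `∂/∂y = 2y + a₁x + a₃` nonzero at both
points `(0, 0)` and `(0, -a₃)`. The tangent at the origin is the line `y = 0`, meeting `W` where
`x³ = 0`: the origin `P` is a flex, so `P + P = -P`, i.e. `3P = O` with `P ≠ O`.
-/

open WeierstrassCurve.Affine

/-- The Weierstrass curve `y² + a₁·xy + a₃·y = x³`. -/
def gammaOneCurve {F : Type*} [Field F] (a1 a3 : F) : WeierstrassCurve.Affine F :=
  ⟨a1, 0, a3, 0, 0⟩

theorem addOrderOf_eq_three_of_add_self_eq_neg {G : Type*} [AddGroup G] {P : G}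
    (h : P + P = -P) (hP : P ≠ 0) : addOrderOf P = 3 := by
  have : Fact (Nat.Prime 3) := ⟨Nat.prime_three⟩
  refine addOrderOf_eq_prime ?_ hP
  rw [succ_nsmul, two_nsmul, h, neg_add_cancel]

namespace gammaOneCurve

variable {F : Type*} [Field F] {a1 a3 : F}

theorem a3_ne_zero (hΔ : a3 ^ 3 * (a1 ^ 3 - 27 * a3) ≠ 0) : a3 ≠ 0 := by
  rintro rfl
  simp at hΔ

theorem equation_zero_iff (y : F) : (gammaOneCurve a1 a3).Equation 0 y ↔ y = 0 ∨ y = -a3 := by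
  rw [equation_iff, eq_neg_iff_add_eq_zero, ← mul_eq_zero]
  simp only [gammaOneCurve]
  constructor <;> intro h <;> linear_combination h

theorem nonsingular_zero_zero (ha3 : a3 ≠ 0) : (gammaOneCurve a1 a3).Nonsingular 0 0 := by
  rw [nonsingular_iff, equation_zero_iff]
  simp [gammaOneCurve, ha3]

theorem nonsingular_zero_neg (ha3 : a3 ≠ 0) : (gammaOneCurve a1 a3).Nonsingular 0 (-a3) := by
  rw [nonsingular_iff, equation_zero_iff]
  simp [gammaOneCurve, ha3]

theorem negY_zero_zero : (gammaOneCurve a1 a3).negY 0 0 = -a3 := by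
  simp [negY, gammaOneCurve]

theorem zero_ne_negY_zero_zero (ha3 : a3 ≠ 0) : (0 : F) ≠ (gammaOneCurve a1 a3).negY 0 0 := by
  rw [negY_zero_zero, ne_eq, zero_eq_neg]
  exact ha3

theorem slope_zero_zero [DecidableEq F] (ha3 : a3 ≠ 0) :
    (gammaOneCurve a1 a3).slope 0 0 0 0 = 0 := by
  rw [slope_of_Y_ne rfl (zero_ne_negY_zero_zero ha3)]
  simp [gammaOneCurve]

end gammaOneCurve

open Classical in
/-- On the smooth Weierstrass curve `W : y² + a₁·xy + a₃·y = x³` (smooth since its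
discriminant `a₃³·(a₁³ - 27·a₃)` is nonzero): the points `(0, 0)` and `(0, -a₃)` lie on `W`
and are its only affine points with `x`-coordinate `0`; moreover `-(0,0) = (0,-a₃)`,
`(0,0) + (0,0) = (0,-a₃)`, and `(0,0)` has exact order `3`. -/
theorem gammaOneCurve_origin_order_three {F : Type*} [Field F] (a1 a3 : F)
    (hΔ : a3 ^ 3 * (a1 ^ 3 - 27 * a3) ≠ 0) :
    (gammaOneCurve a1 a3).Nonsingular 0 0 ∧
    (gammaOneCurve a1 a3).Nonsingular 0 (-a3) ∧
    (∀ y : F, (gammaOneCurve a1 a3).Equation 0 y → y = 0 ∨ y = -a3) ∧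
    ∀ (h₁ : (gammaOneCurve a1 a3).Nonsingular 0 0)
      (h₂ : (gammaOneCurve a1 a3).Nonsingular 0 (-a3)),
      -(Point.some 0 0 h₁) = Point.some 0 (-a3) h₂ ∧
      Point.some 0 0 h₁ + Point.some 0 0 h₁ = Point.some 0 (-a3) h₂ ∧
      addOrderOf (Point.some 0 0 h₁) = 3 := by
  have ha3 := gammaOneCurve.a3_ne_zero hΔ
  refine ⟨gammaOneCurve.nonsingular_zero_zero ha3, gammaOneCurve.nonsingular_zero_neg ha3,
    fun y => (gammaOneCurve.equation_zero_iff y).mp, fun h₁ h₂ => ?_⟩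
  have hneg : -(Point.some 0 0 h₁) = Point.some 0 (-a3) h₂ := by
    rw [Point.neg_some, Point.some.injEq]
    exact ⟨rfl, gammaOneCurve.negY_zero_zero⟩
  have hdouble : Point.some 0 0 h₁ + Point.some 0 0 h₁ = Point.some 0 (-a3) h₂ := by
    rw [Point.add_self_of_Y_ne (gammaOneCurve.zero_ne_negY_zero_zero ha3),
      Point.some.injEq, gammaOneCurve.slope_zero_zero ha3]
    simp [addX, addY, negAddY, negY, gammaOneCurve]
  exact ⟨hneg, hdouble, addOrderOf_eq_three_of_add_self_eq_neg (hdouble.trans hneg.symm)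
    (Point.some_ne_zero h₁)⟩
end

section
/- Let F be a field, a1, a3 ∈ F with a3³·(a1³ − 27·a3) ≠ 0, and let W be the (smooth) Weierstrass curve y² + a1·xy + a3·y = x³ over F. Let P = (x, y) be an affine point of W with x ≠ 0. Then in the group of points of W, translation by the order-3 point P₀ = (0,0) is given by P + P₀ = (−a3·y/x², −a3²·y/x³). -/
/-! The chord through `P = (x, y)` and `P₀ = (0, 0)` has slope `y / x`, so the chord
formulas give the sum explicitly; substituting `y² + a₁xy + a₃y = x³` collapses them to
`(-a₃y/x², -a₃²y/x³)`. -/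

open WeierstrassCurve.Affine

section GammaOneCurve

variable {F : Type*} [Field F] {a1 a3 x y : F}

theorem gammaOneCurve_equation_iff :
    (gammaOneCurve a1 a3).Equation x y ↔ y ^ 2 + a1 * x * y + a3 * y = x ^ 3 := by
  rw [equation_iff]
  simp [gammaOneCurve]

theorem gammaOneCurve_slope_origin [DecidableEq F] (hx : x ≠ 0) :
    (gammaOneCurve a1 a3).slope x 0 y 0 = y / x := by
  rw [slope_of_X_ne hx]
  simp

theorem gammaOneCurve_addX_origin (hx : x ≠ 0) (h : (gammaOneCurve a1 a3).Equation x y) :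
    (gammaOneCurve a1 a3).addX x 0 (y / x) = -a3 * y / x ^ 2 := by
  show (y / x) ^ 2 + a1 * (y / x) - 0 - x - 0 = -a3 * y / x ^ 2
  field_simp
  linear_combination gammaOneCurve_equation_iff.mp h

theorem gammaOneCurve_addY_origin (hx : x ≠ 0) (h : (gammaOneCurve a1 a3).Equation x y) :
    (gammaOneCurve a1 a3).addY x 0 y (y / x) = -a3 ^ 2 * y / x ^ 3 := by
  rw [addY, negAddY, gammaOneCurve_addX_origin hx h, negY]
  show -(y / x * (-a3 * y / x ^ 2 - x) + y) - a1 * (-a3 * y / x ^ 2) - a3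
      = -a3 ^ 2 * y / x ^ 3
  field_simp
  linear_combination a3 * gammaOneCurve_equation_iff.mp h

end GammaOneCurve

open Classical in
theorem gammaOneCurve_translation_by_origin_general {F : Type*} [Field F] (a1 a3 x y : F)
    (hx : x ≠ 0)
    (hP : (gammaOneCurve a1 a3).Nonsingular x y)
    (h₀ : (gammaOneCurve a1 a3).Nonsingular 0 0) :
    ∃ hQ : (gammaOneCurve a1 a3).Nonsingular (-a3 * y / x ^ 2) (-a3 ^ 2 * y / x ^ 3),
      Point.some _ _ hP + Point.some _ _ h₀ = Point.some _ _ hQ := by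
  have hX := gammaOneCurve_addX_origin hx hP.1
  have hY := gammaOneCurve_addY_origin hx hP.1
  rw [← gammaOneCurve_slope_origin hx] at hX hY
  refine ⟨hX ▸ hY ▸ nonsingular_add hP h₀ fun h => absurd h.1 hx, ?_⟩
  rw [Point.add_of_X_ne hx]
  congr 1

open Classical in
/-- On the smooth Weierstrass curve `W : y² + a₁·xy + a₃·y = x³`, translation by the
order-3 point `P₀ = (0, 0)` sends an affine point `P = (x, y)` with `x ≠ 0` to
`(-a₃·y/x², -a₃²·y/x³)`. -/
theorem gammaOneCurve_translation_by_origin {F : Type*} [Field F] (a1 a3 x y : F)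
    (hΔ : a3 ^ 3 * (a1 ^ 3 - 27 * a3) ≠ 0) (hx : x ≠ 0)
    (hP : (gammaOneCurve a1 a3).Nonsingular x y)
    (h₀ : (gammaOneCurve a1 a3).Nonsingular 0 0) :
    ∃ hQ : (gammaOneCurve a1 a3).Nonsingular (-a3 * y / x ^ 2) (-a3 ^ 2 * y / x ^ 3),
      Point.some _ _ hP + Point.some _ _ h₀ = Point.some _ _ hQ :=
  gammaOneCurve_translation_by_origin_general a1 a3 x y hx hP h₀
end

section
/- Let r, k ≥ 0 be integers and set N = 2^r·(2k+1). In the polynomial ring 𝔽₂[a1, a3], consider P = (a3⁴ + a1³·a3³ + a1⁶·a3² + a1⁹·a3)^N + (a3⁴ + a1³·a3³)^N. Then the coefficient of the monomial a1^(3·2^(r+1)) · a3^(2^(r+1)·(4k+1)) in P is 1, and every monomial a1^i·a3^j occurring in P with nonzero coefficient satisfies i ≥ 3·2^(r+1). (That is, δ(Δ^(2^r(2k+1))) ≡ a1^(3·2^(r+1))·a3^(2^(r+1)(4k+1)) + higher terms in a1, modulo 2.) -/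
open MvPolynomial

/-- The mod-2 reduction of `q*(Δ)` in `𝔽₂[a₁, a₃]`. -/
noncomputable def qDelta : MvPolynomial (Fin 2) (ZMod 2) :=
  X 1 ^ 4 + X 0 ^ 3 * X 1 ^ 3 + X 0 ^ 6 * X 1 ^ 2 + X 0 ^ 9 * X 1

/-- The mod-2 reduction of `f*(Δ)` in `𝔽₂[a₁, a₃]`. -/
noncomputable def fDelta : MvPolynomial (Fin 2) (ZMod 2) :=
  X 1 ^ 4 + X 0 ^ 3 * X 1 ^ 3

/-!
Modulo 2, `q*(Δ) - f*(Δ) = a₁⁶·a₃·(a₃ + a₁³)`. Factoring `qⁿ - fⁿ` (with `n = 2k+1`) through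
`q - f` and applying the Frobenius `r` times gives
`P = a₁^(6·2^r) · (a₃·(a₃ + a₁³)·S)^(2^r)` with `S = ∑ qⁱ·f^(n-1-i)`, so every monomial of `P`
has `a₁`-degree at least `3·2^(r+1)`. The coefficient of the lowest `a₁`-power is read off at
`a₁ = 0`, where `q = f = a₃⁴` and hence `S = n·a₃^(8k) = a₃^(8k)` because `n` is odd.
-/

open Finset

theorem CharTwo.pow_two_pow_mul_add_pow_two_pow_mul {R : Type*} [CommRing R] [CharP R 2]
    (x y : R) (r n : ℕ) :
    x ^ (2 ^ r * n) + y ^ (2 ^ r * n)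
      = ((x - y) * ∑ i ∈ range n, x ^ i * y ^ (n - 1 - i)) ^ 2 ^ r := by
  rw [pow_mul', pow_mul', ← add_pow_char_pow, mul_comm, geom_sum₂_mul, CharTwo.sub_eq_add]

section MvPolynomial

variable {σ R : Type*} [CommSemiring R]

theorem coeff_X_pow_mul_single_add (i : σ) (m : ℕ) (p : MvPolynomial σ R) (d : σ →₀ ℕ) :
    (X i ^ m * p).coeff (Finsupp.single i m + d) = p.coeff d := by
  rw [X_pow_eq_monomial, coeff_monomial_mul, one_mul]

theorem le_of_coeff_X_pow_mul_ne_zero {i : σ} {m : ℕ} {p : MvPolynomial σ R} {d : σ →₀ ℕ}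
    (h : (X i ^ m * p).coeff d ≠ 0) : m ≤ d i := by
  rw [X_pow_eq_monomial, coeff_monomial_mul'] at h
  exact Finsupp.single_le_iff.mp (of_not_not fun hle => h (if_neg hle))

noncomputable def evalX0Zero : MvPolynomial (Fin 2) R →+* Polynomial R :=
  eval₂Hom Polynomial.C ![0, Polynomial.X]

@[simp]
theorem evalX0Zero_X_zero : evalX0Zero (X 0 : MvPolynomial (Fin 2) R) = 0 := by
  simp [evalX0Zero]

@[simp]
theorem evalX0Zero_X_one : evalX0Zero (X 1 : MvPolynomial (Fin 2) R) = Polynomial.X := by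
  simp [evalX0Zero]

theorem coeff_evalX0Zero (p : MvPolynomial (Fin 2) R) (m : ℕ) :
    (evalX0Zero p).coeff m = p.coeff (Finsupp.single 1 m) := by
  induction p using MvPolynomial.induction_on' with
  | monomial d a =>
    have hmonomial :
        evalX0Zero (monomial d a) = Polynomial.C a * (0 ^ d 0 * Polynomial.X ^ d 1) := by
      simp [evalX0Zero, eval₂Hom_monomial, Finsupp.prod_fintype, Fin.prod_univ_two]
    rw [hmonomial, coeff_monomial]
    by_cases h0 : d 0 = 0
    · have hd : d = Finsupp.single 1 (d 1) := by
        ext i; fin_cases i <;> simp [h0]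
      rw [hd]
      simp [Polynomial.coeff_X_pow, (Finsupp.single_injective _).eq_iff, eq_comm]
    · have hd : d ≠ Finsupp.single 1 m := fun hd => h0 (by simp [hd])
      simp [h0, hd]
  | add p q hp hq => simp [coeff_add, hp, hq]

end MvPolynomial

theorem qDelta_sub_fDelta : qDelta - fDelta = X 0 ^ 6 * (X 1 ^ 2 + X 0 ^ 3 * X 1) := by
  rw [qDelta, fDelta]; ring

theorem evalX0Zero_qDelta : evalX0Zero qDelta = Polynomial.X ^ 4 := by simp [qDelta]

theorem evalX0Zero_fDelta : evalX0Zero fDelta = Polynomial.X ^ 4 := by simp [fDelta]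

theorem evalX0Zero_geom_sum_qDelta_fDelta (k : ℕ) :
    evalX0Zero (∑ i ∈ range (2 * k + 1), qDelta ^ i * fDelta ^ (2 * k + 1 - 1 - i))
      = Polynomial.X ^ (8 * k) := by
  simp only [map_sum, map_mul, map_pow, evalX0Zero_qDelta, evalX0Zero_fDelta]
  rw [geom_sum₂_self, CharTwo.natCast_eq_ite, if_neg (by simp), one_mul, ← pow_mul]
  congr 1; omega

/-- Modulo 2, `δ(Δ^(2^r·(2k+1))) = a₁^(3·2^(r+1))·a₃^(2^(r+1)·(4k+1)) +` higher terms
in `a₁`. -/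
theorem delta_pow_leading_term (r k : ℕ) :
    (qDelta ^ (2 ^ r * (2 * k + 1)) + fDelta ^ (2 ^ r * (2 * k + 1))).coeff
        (Finsupp.single (0 : Fin 2) (3 * 2 ^ (r + 1))
          + Finsupp.single (1 : Fin 2) (2 ^ (r + 1) * (4 * k + 1))) = 1 ∧
    ∀ d : Fin 2 →₀ ℕ,
      (qDelta ^ (2 ^ r * (2 * k + 1)) + fDelta ^ (2 ^ r * (2 * k + 1))).coeff d ≠ 0 →
        3 * 2 ^ (r + 1) ≤ d 0 := by
  have hfactor : qDelta ^ (2 ^ r * (2 * k + 1)) + fDelta ^ (2 ^ r * (2 * k + 1))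
      = X 0 ^ (3 * 2 ^ (r + 1)) * ((X 1 ^ 2 + X 0 ^ 3 * X 1) *
          ∑ i ∈ range (2 * k + 1), qDelta ^ i * fDelta ^ (2 * k + 1 - 1 - i)) ^ 2 ^ r := by
    rw [CharTwo.pow_two_pow_mul_add_pow_two_pow_mul, qDelta_sub_fDelta, mul_assoc, mul_pow,
      ← pow_mul, show 3 * 2 ^ (r + 1) = 6 * 2 ^ r by ring]
  rw [hfactor]
  refine ⟨?_, fun d hd => le_of_coeff_X_pow_mul_ne_zero hd⟩
  rw [coeff_X_pow_mul_single_add, ← coeff_evalX0Zero]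
  simp only [map_pow, map_mul, map_add, evalX0Zero_X_zero, evalX0Zero_X_one,
    evalX0Zero_geom_sum_qDelta_fDelta]
  rw [← Polynomial.coeff_X_pow_self (R := ZMod 2) (2 ^ (r + 1) * (4 * k + 1))]
  congr 1
  ring
end

section
/- Let r, k ≥ 0 be integers and set N = 2^r·(2k+1). In the polynomial ring 𝔽₂[t], the polynomial (1 + t³ + t⁶ + t⁹)^N − (1 + t³)^N is nonzero, and its trailing degree (the smallest exponent appearing with nonzero coefficient) equals 3·2^(r+1). -/
/-!
Since `1 + t³ + t⁶ + t⁹ = (1 + t³)(1 + t⁶)`, the difference is `(1 + t³)^N ((1 + t⁶)^N - 1)`.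
By Frobenius `(1 + t⁶)^N = (1 + u)^(2k+1)` with `u = t^(6·2^r)`, and `(1 + u)^n - 1 = u · S(u)`
where `S(0) = n`; as `2k + 1` is odd and `1 + t³` has constant term `1`, the lowest term is `u`.
-/

open Polynomial

namespace Polynomial

variable {R : Type*}

theorem natTrailingDegree_mul_of_coeff_zero_eq_one [Semiring R] {p q : R[X]}
    (hp : p.coeff 0 = 1) : (p * q).natTrailingDegree = q.natTrailingDegree := by
  rcases eq_or_ne q 0 with rfl | hq
  · simp
  have : Nontrivial R := nontrivial_of_ne _ _ (mt trailingCoeff_eq_zero.mp hq)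
  have hp₀ : p.natTrailingDegree = 0 := natTrailingDegree_eq_zero.mpr (.inr (hp ▸ one_ne_zero))
  have htc : p.trailingCoeff * q.trailingCoeff ≠ 0 := by
    rw [trailingCoeff, hp₀, hp, one_mul]
    exact mt trailingCoeff_eq_zero.mp hq
  rw [natTrailingDegree_mul' htc, hp₀, zero_add]

theorem natTrailingDegree_one_add_X_pow_pow_sub_one [CommRing R] {m n : ℕ} (hm : 0 < m)
    (hn : (n : R) ≠ 0) : ((1 + X ^ m : R[X]) ^ n - 1).natTrailingDegree = m := by
  set S : R[X] := ∑ i ∈ Finset.range n, (1 + X ^ m) ^ i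
  have hS : (1 + X ^ m : R[X]) ^ n - 1 = S * X ^ m := by
    rw [← geom_sum_mul, add_sub_cancel_left]
  have hS₀ : S.coeff 0 ≠ 0 := by
    simpa [S, coeff_zero_eq_eval_zero, eval_finsetSum, hm.ne'] using hn
  rw [hS, natTrailingDegree_mul_X_pow (fun h ↦ hS₀ (by rw [h, coeff_zero])),
    natTrailingDegree_eq_zero.mpr (.inr hS₀), zero_add]

end Polynomial

/-- In `𝔽₂[t]`, the polynomial `(1 + t³ + t⁶ + t⁹)^(2^r·(2k+1)) - (1 + t³)^(2^r·(2k+1))`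
is nonzero with trailing degree `3·2^(r+1)`. -/
theorem trailing_degree_delta_pow (r k : ℕ) :
    ((1 + X ^ 3 + X ^ 6 + X ^ 9 : Polynomial (ZMod 2)) ^ (2 ^ r * (2 * k + 1))
        - (1 + X ^ 3) ^ (2 ^ r * (2 * k + 1))) ≠ 0 ∧
    ((1 + X ^ 3 + X ^ 6 + X ^ 9 : Polynomial (ZMod 2)) ^ (2 ^ r * (2 * k + 1))
        - (1 + X ^ 3) ^ (2 ^ r * (2 * k + 1))).natTrailingDegree = 3 * 2 ^ (r + 1) := by
  set N := 2 ^ r * (2 * k + 1)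
  have hfrobenius : (1 + X ^ 6 : (ZMod 2)[X]) ^ N = (1 + X ^ (6 * 2 ^ r)) ^ (2 * k + 1) := by
    rw [pow_mul, add_pow_char_pow, one_pow, ← pow_mul]
  have hfactor : (1 + X ^ 3 + X ^ 6 + X ^ 9 : (ZMod 2)[X]) ^ N - (1 + X ^ 3) ^ N
      = (1 + X ^ 3) ^ N * ((1 + X ^ (6 * 2 ^ r)) ^ (2 * k + 1) - 1) := by
    rw [show (1 + X ^ 3 + X ^ 6 + X ^ 9 : (ZMod 2)[X]) = (1 + X ^ 3) * (1 + X ^ 6) by ring,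
      mul_pow, hfrobenius, mul_sub, mul_one]
  have hodd : ((2 * k + 1 : ℕ) : ZMod 2) ≠ 0 := by
    simp [show (2 : ZMod 2) = 0 from rfl]
  have hdeg : ((1 + X ^ 3 + X ^ 6 + X ^ 9 : (ZMod 2)[X]) ^ N - (1 + X ^ 3) ^ N).natTrailingDegree
      = 3 * 2 ^ (r + 1) := by
    rw [hfactor, natTrailingDegree_mul_of_coeff_zero_eq_one (by simp [coeff_zero_eq_eval_zero]),
      natTrailingDegree_one_add_X_pow_pow_sub_one (by positivity) hodd]
    ring
  refine ⟨fun h ↦ ?_, hdeg⟩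
  rw [h, natTrailingDegree_zero] at hdeg
  exact (show 0 < 3 * 2 ^ (r + 1) by positivity).ne hdeg
end

section
/- Let k ≥ 1 be an integer and let ν₂(k) denote the 2-adic valuation of k. In the polynomial ring ℤ[a1, a3], there exists a polynomial g such that (a1⁴ + 216·a1·a3)^k − (a1⁴ − 24·a1·a3)^k = 2^(4+ν₂(k)) · g, and the coefficient of the monomial a1^(4k−3)·a3 in g is odd. (That is, δ(c4^k) = 2^(4+ν₂(k))·[(odd)·a1^(4(k−1))·a1·a3 + other terms], and in particular 2^(4+ν₂(k)) divides δ(c4^k) exactly.) -/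
/-!
Put `x = a₁⁴ + 216·a₁a₃` and `y = a₁⁴ - 24·a₁a₃`, so that `x - y = 2⁴·(15·a₁a₃)`. This is a
lifting-the-exponent argument at the prime 2. For odd `m`, `(x^m - y^m)/(x - y) = ∑ xⁱy^(m-1-i)`
is `≡ m·y^(m-1) ≡ y^(m-1)` mod 2. Doubling the exponent multiplies by `x^k + y^k = 2y^k + (x^k - y^k)`,
which is `≡ 2y^k` mod 4 because `4 ∣ x - y`, so it contributes exactly one more factor 2. Hence
`x^k - y^k = 2^(4 + ν₂(k))·g` with `g ≡ 15·a₁a₃·y^(k-1) ≡ a₁^(4k-3)·a₃` mod 2.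
Congruences mod 2 are expressed through a ring hom `φ` into a ring in which `2 = 0`.
-/

open MvPolynomial Finset

section
variable {R S : Type*} [CommRing R] [CommRing S] (φ : R →+* S)

theorem exists_pow_sub_pow_eq_of_odd (h2 : (2 : S) = 0) {x y d : R} {n : ℕ} (hn : n ≠ 0)
    (hxy : x - y = 2 ^ n * d) {m : ℕ} (hm : Odd m) :
    ∃ g, x ^ m - y ^ m = 2 ^ n * g ∧ φ g = φ d * φ y ^ (m - 1) := by
  have hφxy : φ x = φ y := by
    rw [← sub_eq_zero, ← map_sub, hxy, map_mul, map_pow, map_ofNat, h2, zero_pow hn, zero_mul]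
  refine ⟨d * ∑ i ∈ range m, x ^ i * y ^ (m - 1 - i), ?_, ?_⟩
  · rw [← geom_sum₂_mul, hxy]
    ring
  · rw [map_mul, RingHom.map_geom_sum₂, hφxy, geom_sum₂_self,
      natCast_eq_one_of_odd_of_two_eq_zero hm h2, one_mul]

theorem exists_pow_sub_pow_two_mul_eq (h2 : (2 : S) = 0) {x y g : R} {e k : ℕ} (he : 2 ≤ e)
    (h : x ^ k - y ^ k = 2 ^ e * g) :
    ∃ g', x ^ (2 * k) - y ^ (2 * k) = 2 ^ (e + 1) * g' ∧ φ g' = φ g * φ y ^ k := by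
  obtain ⟨e, rfl⟩ : ∃ e', e = e' + 1 := ⟨e - 1, by omega⟩
  refine ⟨g * (y ^ k + 2 ^ e * g), ?_, ?_⟩
  · linear_combination (x ^ k + y ^ k + 2 ^ (e + 1) * g) * h
  · simp only [map_mul, map_add, map_pow, map_ofNat, h2, zero_pow (by omega : e ≠ 0), zero_mul,
      add_zero]

theorem exists_pow_sub_pow_eq_two_pow_padicValNat_mul (h2 : (2 : S) = 0) {x y d : R} {n : ℕ}
    (hn : 2 ≤ n) (hxy : x - y = 2 ^ n * d) {k : ℕ} (hk : k ≠ 0) :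
    ∃ g, x ^ k - y ^ k = 2 ^ (n + padicValNat 2 k) * g ∧ φ g = φ d * φ y ^ (k - 1) := by
  obtain ⟨v, m, hm, rfl⟩ := Nat.exists_eq_two_pow_mul_odd hk
  have hm0 : m ≠ 0 := hm.pos.ne'
  rw [padicValNat.mul (by positivity) hm0, padicValNat.prime_pow,
    padicValNat.eq_zero_of_not_dvd hm.not_two_dvd_nat, add_zero]
  induction v with
  | zero => simpa using exists_pow_sub_pow_eq_of_odd φ h2 (by omega) hxy hm
  | succ v ih =>
    obtain ⟨g, hg, hφg⟩ := ih (by positivity)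
    obtain ⟨g', hg', hφg'⟩ := exists_pow_sub_pow_two_mul_eq φ h2 (by omega) hg
    have hpos : 0 < 2 ^ v * m := by positivity
    rw [pow_succ', mul_assoc, ← add_assoc]
    refine ⟨g', hg', ?_⟩
    rw [hφg', hφg, mul_assoc, ← pow_add]
    congr 2
    omega

end

/-- `δ(c₄^k) = q*(c₄)^k - f*(c₄)^k = 2^(4+ν₂(k))·g` in `ℤ[a₁, a₃]`, where the coefficient
of `a₁^(4k-3)·a₃` in `g` is odd; in particular `2^(4+ν₂(k))` divides `δ(c₄^k)` exactly. -/
theorem delta_c4_pow_divisibility (k : ℕ) (hk : 1 ≤ k) :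
    ∃ g : MvPolynomial (Fin 2) ℤ,
      ((X 0 : MvPolynomial (Fin 2) ℤ) ^ 4 + 216 * X 0 * X 1) ^ k
          - ((X 0 : MvPolynomial (Fin 2) ℤ) ^ 4 - 24 * X 0 * X 1) ^ k
        = 2 ^ (4 + padicValNat 2 k) * g ∧
      Odd (g.coeff (Finsupp.single (0 : Fin 2) (4 * k - 3)
        + Finsupp.single (1 : Fin 2) 1)) := by
  set φ := MvPolynomial.map (σ := Fin 2) (Int.castRingHom (ZMod 2))
  have h2 : (2 : MvPolynomial (Fin 2) (ZMod 2)) = 0 := by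
    rw [← map_ofNat C, show (2 : ZMod 2) = 0 from rfl, map_zero]
  obtain ⟨g, hg, hφg⟩ := exists_pow_sub_pow_eq_two_pow_padicValNat_mul φ h2 (n := 4) (by norm_num)
    (x := X 0 ^ 4 + 216 * X 0 * X 1) (y := X 0 ^ 4 - 24 * X 0 * X 1) (d := 15 * X 0 * X 1)
    (by ring) (by omega : k ≠ 0)
  refine ⟨g, hg, ?_⟩
  have hφd : φ (15 * X 0 * X 1) = X 0 * X 1 := by
    simp only [φ, map_mul, map_ofNat, map_X]
    linear_combination (7 * X 0 * X 1) * h2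
  have hφy : φ (X 0 ^ 4 - 24 * X 0 * X 1) = X 0 ^ 4 := by
    simp only [φ, map_sub, map_mul, map_pow, map_ofNat, map_X]
    linear_combination (-12 * X 0 * X 1) * h2
  have hmonomial : X 0 * X 1 * (X 0 ^ 4) ^ (k - 1) =
      monomial (Finsupp.single (0 : Fin 2) (4 * k - 3) + Finsupp.single 1 1) (1 : ZMod 2) := by
    rw [monomial_add_single, ← X_pow_eq_monomial, pow_one, ← pow_mul,
      show 4 * k - 3 = 1 + 4 * (k - 1) by omega, pow_add]
    ring
  rw [← ZMod.intCast_eq_one_iff_odd, ← eq_intCast (Int.castRingHom (ZMod 2)), ← coeff_map, hφg,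
    hφd, hφy, hmonomial, coeff_monomial, if_pos rfl]
end

section
/- Let k ≥ 0 be an integer. In the polynomial ring ℤ[a1, a3], there exists a polynomial g such that (a1⁴ + 216·a1·a3)^k·(−a1⁶ + 540·a1³·a3 + 5832·a3²) − (a1⁴ − 24·a1·a3)^k·(−a1⁶ + 36·a1³·a3 − 216·a3²) = 2³ · g, and the coefficient of the monomial a1^(4k+3)·a3 in g is odd. (That is, δ(c4^k·c6) = 2³·[(odd)·a1^(4k+2)·a1·a3 + other terms], so 2³ divides δ(c4^k·c6) exactly.) -/
/-!
Write `δ(c₄^k·c₆) = Q^k·(q₆ - f₆) + (Q^k - F^k)·f₆` with `Q = q*(c₄)`, `F = f*(c₄)`, `q₆ = q*(c₆)`,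
`f₆ = f*(c₆)`. Both `Q - F = 2³·30·a₁a₃` and `q₆ - f₆ = 2³·(63·a₁³a₃ + 756·a₃²)` are divisible
by `2³`, and `Q - F` divides `Q^k - F^k`; so `δ(c₄^k·c₆) = 2³·g`. Modulo 2 the cofactor `g`
reduces to `a₁^(4k)·a₁³a₃`, since `Q ≡ a₁⁴`, `63 ≡ 1` and the even constants `756`, `30` vanish.
-/

open MvPolynomial

theorem pow_mul_sub_pow_mul_eq_mul {R : Type*} [CommRing R] {x y x' y' d u v : R} (k : ℕ)
    (h : x - y = d * u) (h' : x' - y' = d * v) :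
    ∃ t, x ^ k * x' - y ^ k * y' = d * (x ^ k * v + u * t * y') := by
  obtain ⟨t, ht⟩ := sub_dvd_pow_sub_pow x y k
  exact ⟨t, by linear_combination x ^ k * h' + y' * ht + t * y' * h⟩

theorem odd_coeff_of_map_eq_monomial {σ : Type*} {p : MvPolynomial σ ℤ} {m : σ →₀ ℕ}
    (h : map (Int.castRingHom (ZMod 2)) p = monomial m 1) : Odd (p.coeff m) := by
  classical
  rw [← ZMod.intCast_eq_one_iff_odd, ← eq_intCast (Int.castRingHom (ZMod 2)), ← coeff_map, h,
    coeff_monomial, if_pos rfl]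

/-- `δ(c₄^k·c₆) = q*(c₄)^k·q*(c₆) - f*(c₄)^k·f*(c₆) = 2³·g` in `ℤ[a₁, a₃]`, where the
coefficient of `a₁^(4k+3)·a₃` in `g` is odd; in particular `2³` divides `δ(c₄^k·c₆)`
exactly. -/
theorem delta_c4_pow_c6_divisibility (k : ℕ) :
    ∃ g : MvPolynomial (Fin 2) ℤ,
      ((X 0 : MvPolynomial (Fin 2) ℤ) ^ 4 + 216 * X 0 * X 1) ^ k
            * (-(X 0 : MvPolynomial (Fin 2) ℤ) ^ 6 + 540 * X 0 ^ 3 * X 1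
              + 5832 * X 1 ^ 2)
          - ((X 0 : MvPolynomial (Fin 2) ℤ) ^ 4 - 24 * X 0 * X 1) ^ k
            * (-(X 0 : MvPolynomial (Fin 2) ℤ) ^ 6 + 36 * X 0 ^ 3 * X 1
              - 216 * X 1 ^ 2)
        = 2 ^ 3 * g ∧
      Odd (g.coeff (Finsupp.single (0 : Fin 2) (4 * k + 3)
        + Finsupp.single (1 : Fin 2) 1)) := by
  obtain ⟨t, hδ⟩ := pow_mul_sub_pow_mul_eq_mul k (d := 2 ^ 3)
    (x := (X 0 : MvPolynomial (Fin 2) ℤ) ^ 4 + 216 * X 0 * X 1) (y := X 0 ^ 4 - 24 * X 0 * X 1)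
    (x' := -X 0 ^ 6 + 540 * X 0 ^ 3 * X 1 + 5832 * X 1 ^ 2)
    (y' := -X 0 ^ 6 + 36 * X 0 ^ 3 * X 1 - 216 * X 1 ^ 2)
    (u := 30 * X 0 * X 1) (v := 63 * X 0 ^ 3 * X 1 + 756 * X 1 ^ 2) (by ring) (by ring)
  refine ⟨_, hδ, odd_coeff_of_map_eq_monomial ?_⟩
  rw [monomial_single_add, ← X]
  simp only [map_add, map_mul, map_pow, map_X, map_ofNat]
  simp (disch := norm_num) only [CharP.ofNat_eq_zero' _ 2, zero_mul, add_zero]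
  linear_combination (31 * X 0 ^ (4 * k + 3) * X 1) *
    CharTwo.two_eq_zero (R := MvPolynomial (Fin 2) (ZMod 2))
end

section
/- Let d ≥ 2 and k ≥ 1 be integers, and let ν₂(k) denote the 2-adic valuation of k. In the polynomial ring ℤ[u, v], there exists a polynomial g such that (u + 2^d·v)^k = u^k + 2^(d+ν₂(k)) · g, where the coefficient of the monomial u^(k−1)·v in g is odd (so g = (odd)·u^(k−1)·v + terms of higher degree in v). -/
/-!
Expanding, `(u + 2^d v)^k - u^k = ∑_{j ≥ 1} C(k, j) 2^(d j) u^(k-j) v^j`.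
The identity `j C(k, j) = k C(k-1, j-1)` gives `ν₂(C(k, j)) ≥ ν₂(k) - ν₂(j)`, and
`ν₂(j) ≤ j - 1 ≤ d (j - 1)`, so every term is divisible by `2^(d + ν₂(k))`.
For `j = 1` the quotient is the odd part `k / 2^ν₂(k)` of `k`.
-/

open MvPolynomial

namespace Nat

variable {p : ℕ} [Fact p.Prime]

theorem padicValNat_le_padicValNat_choose_add {n j : ℕ} (hj : 1 ≤ j) (hjn : j ≤ n) :
    padicValNat p n ≤ padicValNat p (n.choose j) + padicValNat p j := by
  obtain ⟨n, rfl⟩ : ∃ n', n = n' + 1 := ⟨n - 1, by omega⟩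
  obtain ⟨j, rfl⟩ : ∃ j', j = j' + 1 := ⟨j - 1, by omega⟩
  have hdvd : n + 1 ∣ (n + 1).choose (j + 1) * (j + 1) :=
    Dvd.intro _ (add_one_mul_choose_eq n j)
  rw [← padicValNat.mul (choose_ne_zero hjn) j.succ_ne_zero]
  exact (padicValNat_dvd_iff_le (mul_ne_zero (choose_ne_zero hjn) j.succ_ne_zero)).mp
    (pow_padicValNat_dvd.trans hdvd)

theorem pow_add_padicValNat_dvd_choose_mul_pow {d n j : ℕ} (hd : 1 ≤ d) (hj : 1 ≤ j) :
    p ^ (d + padicValNat p n) ∣ n.choose j * p ^ (d * j) := by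
  rcases lt_or_ge n j with hnj | hjn
  · simp [choose_eq_zero_of_lt hnj]
  have hp := (Fact.out : p.Prime)
  have hchoose := padicValNat_le_padicValNat_choose_add (p := p) hj hjn
  have hvj : padicValNat p j < j :=
    (padicValNat_le_nat_log j).trans_lt (log_lt_self p (by omega))
  rw [padicValNat_dvd_iff_le (mul_ne_zero (choose_ne_zero hjn) (pow_ne_zero _ hp.ne_zero)),
    padicValNat.mul (choose_ne_zero hjn) (pow_ne_zero _ hp.ne_zero), padicValNat.prime_pow]
  nlinarith

theorem not_dvd_of_mul_pow_padicValNat_eq {m n : ℕ} (hn : n ≠ 0)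
    (h : m * p ^ padicValNat p n = n) : ¬ p ∣ m := by
  rintro ⟨c, rfl⟩
  exact pow_succ_padicValNat_not_dvd (p := p) hn ((Dvd.intro c (by ring)).trans h.dvd)

end Nat

namespace Finsupp

theorem single_add_single_apply_right {ι M : Type*} [AddZeroClass M] {i i' : ι} (hii' : i ≠ i')
    (a b : M) : (single i a + single i' b) i' = b := by
  simp [hii']

end Finsupp

namespace MvPolynomial

variable {σ R : Type*} [CommSemiring R]

theorem add_C_mul_X_pow (i i' : σ) (c : R) (k : ℕ) :
    (X i + C c * X i') ^ k = ∑ j ∈ Finset.range (k + 1),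
      monomial (Finsupp.single i (k - j) + Finsupp.single i' j) (k.choose j * c ^ j) := by
  rw [add_comm, add_pow]
  refine Finset.sum_congr rfl fun j _ => ?_
  rw [monomial_add_single, ← C_mul_X_pow_eq_monomial, mul_pow, ← map_pow]
  simp only [map_mul, map_natCast]
  ring

noncomputable def binomialTail (i i' : σ) (k : ℕ) (b : ℕ → R) : MvPolynomial σ R :=
  ∑ j ∈ Finset.range k,
    monomial (Finsupp.single i (k - (j + 1)) + Finsupp.single i' (j + 1)) (b (j + 1))

theorem add_C_mul_X_pow_eq_X_pow_add_C_mul_binomialTail (i i' : σ) {c q : R} {k : ℕ}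
    {b : ℕ → R} (hb : ∀ j, 1 ≤ j → j ≤ k → k.choose j * c ^ j = q * b j) :
    (X i + C c * X i') ^ k = X i ^ k + C q * binomialTail i i' k b := by
  rw [add_C_mul_X_pow, Finset.sum_range_succ', binomialTail, Finset.mul_sum, add_comm]
  congr 1
  · simp [X_pow_eq_monomial]
  · refine Finset.sum_congr rfl fun j hj => ?_
    rw [C_mul_monomial, hb (j + 1) (by omega) (by simpa using hj)]

variable {i i' : σ} {k : ℕ} {b : ℕ → R}

theorem coeff_binomialTail_single_add_single_one (hii' : i ≠ i') (hk : 1 ≤ k) :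
    (binomialTail i i' k b).coeff (Finsupp.single i (k - 1) + Finsupp.single i' 1) = b 1 := by
  classical
  rw [binomialTail, coeff_sum, Finset.sum_eq_single 0]
  · rw [coeff_monomial, if_pos rfl]
  · intro j _ hj
    rw [coeff_monomial, if_neg]
    intro h
    have := congrArg (· i') h
    simp only [Finsupp.single_add_single_apply_right hii'] at this
    omega
  · exact fun h => (h (Finset.mem_range.mpr (by omega))).elim

theorem eq_or_two_le_of_coeff_binomialTail_ne_zero (hii' : i ≠ i') {m : σ →₀ ℕ}
    (hm : (binomialTail i i' k b).coeff m ≠ 0) :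
    m = Finsupp.single i (k - 1) + Finsupp.single i' 1 ∨ 2 ≤ m i' := by
  classical
  rw [binomialTail, coeff_sum] at hm
  obtain ⟨j, -, hj⟩ := Finset.exists_ne_zero_of_sum_ne_zero hm
  rw [coeff_monomial] at hj
  obtain rfl : Finsupp.single i (k - (j + 1)) + Finsupp.single i' (j + 1) = m := by
    by_contra h; exact hj (if_neg h)
  rcases j with _ | j
  · exact Or.inl rfl
  · right; rw [Finsupp.single_add_single_apply_right hii']; omega

end MvPolynomial

/-- For `d ≥ 2` and `k ≥ 1`, in `ℤ[u, v]` one has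
`(u + 2^d·v)^k = u^k + 2^(d+ν₂(k))·g` where
`g = (odd)·u^(k-1)·v + terms of higher degree in v`. -/
theorem binomial_two_divisibility (d k : ℕ) (hd : 2 ≤ d) (hk : 1 ≤ k) :
    ∃ g : MvPolynomial (Fin 2) ℤ,
      ((X 0 : MvPolynomial (Fin 2) ℤ) + 2 ^ d * X 1) ^ k
        = (X 0 : MvPolynomial (Fin 2) ℤ) ^ k + 2 ^ (d + padicValNat 2 k) * g ∧
      Odd (g.coeff (Finsupp.single (0 : Fin 2) (k - 1)
        + Finsupp.single (1 : Fin 2) 1)) ∧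
      ∀ m : Fin 2 →₀ ℕ, g.coeff m ≠ 0 →
        m = Finsupp.single (0 : Fin 2) (k - 1) + Finsupp.single (1 : Fin 2) 1
          ∨ 2 ≤ m 1 := by
  set ν := padicValNat 2 k
  set b : ℕ → ℕ := fun j => k.choose j * 2 ^ (d * j) / 2 ^ (d + ν)
  have hb (j : ℕ) (hj : 1 ≤ j) : b j * 2 ^ (d + ν) = k.choose j * 2 ^ (d * j) :=
    Nat.div_mul_cancel (Nat.pow_add_padicValNat_dvd_choose_mul_pow (by omega) hj)
  have hb₁ : b 1 * 2 ^ ν = k := by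
    have := hb 1 le_rfl
    rw [pow_add, Nat.choose_one_right, mul_one, mul_comm (2 ^ d), ← mul_assoc] at this
    exact Nat.eq_of_mul_eq_mul_right (by positivity) this
  refine ⟨binomialTail 0 1 k (fun j => (b j : ℤ)), ?_, ?_,
    fun m => eq_or_two_le_of_coeff_binomialTail_ne_zero (by decide)⟩
  · have := add_C_mul_X_pow_eq_X_pow_add_C_mul_binomialTail (0 : Fin 2) 1
      (c := (2 : ℤ) ^ d) (q := 2 ^ (d + ν)) (k := k) (b := fun j => (b j : ℤ)) fun j hj _ => by
        rw [← pow_mul, mul_comm _ (b j : ℤ)]; exact_mod_cast (hb j hj).symm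
    simpa using this
  · rw [coeff_binomialTail_single_add_single_one (by decide) hk, Int.odd_coe_nat,
      ← Nat.not_even_iff_odd, even_iff_two_dvd]
    exact Nat.not_dvd_of_mul_pow_padicValNat_eq (by omega) hb₁
end
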